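/- arXiv:2411.01682 — 2 statements merged into one kernel-verified Lean document; each statement's English description precedes it below -/
import Mathlib

section
/- Let σ ∈ (1/2, 1), K ≥ 0, and let φ : (0, ∞) → ℝ be continuous with |φ(τ)| ≤ K·τ^{σ−1} for all τ > 0. Suppose v : (0, ∞) → ℝ is twice continuously differentiable, the radial function u(x) := v(|x|) satisfies Δu(x) = φ(|x|) for all x ∈ ℝ² \ {0}, and ∇u ∈ L^p(B₁(0)) for some p ∈ (2, ∞]. Then there is a constant c ∈ ℝ such that v(r) = 𝒥[φ](r) + c for all r > 0. -/
/-!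
With `w = v'`, the Laplacian of `v(|x|)` is `w' + w / r`, so the equation reads `(r w)' = r φ`
and `r w(r) = ∫₀^r τ φ(τ) dτ + C`. The bound on `φ` makes the integral `O(r^{σ+1})`, hence
`|∇u(x)| = |w(|x|)| ≈ |C| / |x|` near the origin. Since `p > 2`, `∇u ∈ L²(B₁)`, while `|x|⁻²` is
not integrable near the origin of the plane; so `C = 0`, `v' = 𝒥[φ]'`, and `v - 𝒥[φ]` is constant.
-/

open MeasureTheory
open scoped ENNReal

noncomputable section

abbrev E2 : Type := EuclideanSpace ℝ (Fin 2)

/-- The radial inverse Laplacian `𝒥[φ](r) = ∫₀^r ρ⁻¹ (∫₀^ρ τ φ(τ) dτ) dρ`. -/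
def calJ (φ : ℝ → ℝ) (r : ℝ) : ℝ :=
  ∫ ρ in Set.Ioc (0 : ℝ) r, (∫ τ in Set.Ioc (0 : ℝ) ρ, τ * φ τ) / ρ

def pd (i : Fin 2) (u : E2 → ℝ) (y : E2) : ℝ :=
  fderiv ℝ u y (EuclideanSpace.single i 1)

open Set Filter Topology Metric Module

theorem hasDerivAt_integral_Ioc_zero {E : Type*} [NormedAddCommGroup E] [NormedSpace ℝ E]
    [CompleteSpace E] {f : ℝ → E} {r : ℝ} (hr : 0 < r) (hf : IntegrableOn f (Ioc 0 r))
    (hcont : ContinuousOn f (Ioi 0)) :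
    HasDerivAt (fun s => ∫ τ in Ioc 0 s, f τ) (f r) r := by
  have hFTC := intervalIntegral.integral_hasDerivAt_right
    ((intervalIntegrable_iff_integrableOn_Ioc_of_le hr.le).2 hf)
    (hcont.stronglyMeasurableAtFilter isOpen_Ioi r hr) (hcont.continuousAt (Ioi_mem_nhds hr))
  refine hFTC.congr_of_eventuallyEq ?_
  filter_upwards [Ioi_mem_nhds hr] with s hs
  exact (intervalIntegral.integral_of_le (f := f) (le_of_lt hs)).symm

theorem exists_eq_add_of_hasDerivAt_Ioi {f g f' : ℝ → ℝ}
    (hf : ∀ t, 0 < t → HasDerivAt f (f' t) t) (hg : ∀ t, 0 < t → HasDerivAt g (f' t) t) :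
    ∃ c, ∀ t, 0 < t → f t = g t + c :=
  isOpen_Ioi.exists_eq_add_of_deriv_eq isPreconnected_Ioi
    (fun t ht => (hf t ht).differentiableAt.differentiableWithinAt)
    (fun t ht => (hg t ht).differentiableAt.differentiableWithinAt)
    (fun t ht => (hf t ht).deriv.trans (hg t ht).deriv.symm)

section RpowBound

variable {f : ℝ → ℝ} {K s : ℝ}

theorem integrableOn_Ioc_zero_of_abs_le_rpow (hs : -1 < s) (hf : ContinuousOn f (Ioi 0))
    (hbound : ∀ τ, 0 < τ → |f τ| ≤ K * τ ^ s) (b : ℝ) : IntegrableOn f (Ioc 0 b) := by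
  refine Integrable.mono' ((intervalIntegral.intervalIntegrable_rpow' hs).1.const_mul K)
    ((hf.mono Ioc_subset_Ioi_self).aestronglyMeasurable measurableSet_Ioc) ?_
  filter_upwards [ae_restrict_mem measurableSet_Ioc] with τ hτ
  exact hbound τ hτ.1

theorem abs_integral_Ioc_zero_le_rpow (hs : -1 < s)
    (hbound : ∀ τ, 0 < τ → |f τ| ≤ K * τ ^ s) {b : ℝ} (hb : 0 ≤ b) :
    |∫ τ in Ioc 0 b, f τ| ≤ K * b ^ (s + 1) / (s + 1) := by
  have hrpow : IntegrableOn (fun τ => K * τ ^ s) (Ioc 0 b) :=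
    (intervalIntegral.intervalIntegrable_rpow' hs).1.const_mul K
  calc |∫ τ in Ioc 0 b, f τ| ≤ ∫ τ in Ioc 0 b, K * τ ^ s :=
        norm_integral_le_of_norm_le (f := f) hrpow
          ((ae_restrict_mem measurableSet_Ioc).mono fun τ hτ => hbound τ hτ.1)
    _ = K * b ^ (s + 1) / (s + 1) := by
        rw [← intervalIntegral.integral_of_le hb, intervalIntegral.integral_const_mul,
          integral_rpow (Or.inl hs), Real.zero_rpow (by linarith), sub_zero, mul_div_assoc]

end RpowBound

theorem not_integrableOn_ball_norm_rpow_neg_finrank {E : Type*} [NormedAddCommGroup E]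
    [NormedSpace ℝ E] [FiniteDimensional ℝ E] [Nontrivial E] [MeasurableSpace E] [BorelSpace E]
    (μ : Measure E) [μ.IsAddHaarMeasure] {r : ℝ} (hr : 0 < r) :
    ¬ IntegrableOn (fun x : E => ‖x‖ ^ (-(finrank ℝ E : ℝ))) (ball 0 r) μ := by
  have hd : 1 ≤ finrank ℝ E := finrank_pos
  rw [integrableOn_fun_norm_addHaar μ (f := fun y => y ^ (-(finrank ℝ E : ℝ))),
    integrableOn_congr_fun (g := fun y => y ^ (-1 : ℝ)) _ measurableSet_Ioo,
    intervalIntegral.integrableOn_Ioo_rpow_iff hr]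
  · exact lt_irrefl _
  · intro y hy
    dsimp only
    rw [smul_eq_mul, ← Real.rpow_natCast, ← Real.rpow_add hy.1, Nat.cast_sub hd]
    ring_nf

section RadialCalculus

variable {F : Type*} [NormedAddCommGroup F] [InnerProductSpace ℝ F]

theorem hasFDerivAt_norm_of_ne_zero {x : F} (hx : x ≠ 0) :
    HasFDerivAt (‖·‖) (‖x‖⁻¹ • innerSL ℝ x) x := by
  have hsqrt := (Real.hasDerivAt_sqrt (pow_ne_zero 2 (norm_ne_zero_iff.2 hx))).comp_hasFDerivAt x
    (hasStrictFDerivAt_norm_sq x).hasFDerivAt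
  simp only [Function.comp_def, Real.sqrt_sq (norm_nonneg _)] at hsqrt
  refine hsqrt.congr_fderiv ?_
  ext y
  simp only [one_div, mul_inv_rev, smul_apply, coe_innerSL_apply, nsmul_eq_mul, Nat.cast_ofNat,
    smul_eq_mul]
  field_simp

theorem HasDerivAt.hasFDerivAt_comp_norm {f : ℝ → ℝ} {f' : ℝ} {x : F} (hx : x ≠ 0)
    (hf : HasDerivAt f f' ‖x‖) :
    HasFDerivAt (fun y => f ‖y‖) ((f' / ‖x‖) • innerSL ℝ x) x := by
  have h := hf.comp_hasFDerivAt x (hasFDerivAt_norm_of_ne_zero hx)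
  rwa [smul_smul, ← div_eq_mul_inv] at h

theorem norm_gradient_comp_norm [CompleteSpace F] {f : ℝ → ℝ} {f' : ℝ} {x : F} (hx : x ≠ 0)
    (hf : HasDerivAt f f' ‖x‖) :
    ‖gradient (fun y => f ‖y‖) x‖ = |f'| := by
  rw [gradient, LinearIsometryEquiv.norm_map, (hf.hasFDerivAt_comp_norm hx).fderiv, norm_smul,
    innerSL_apply_norm, Real.norm_eq_abs, abs_div, abs_norm,
    div_mul_cancel₀ _ (norm_ne_zero_iff.2 hx)]

end RadialCalculus

theorem pd_comp_norm {f : ℝ → ℝ} {f' : ℝ} {y : E2} (hy : y ≠ 0) (hf : HasDerivAt f f' ‖y‖)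
    (i : Fin 2) : pd i (fun z => f ‖z‖) y = f' / ‖y‖ * y i := by
  rw [pd, (hf.hasFDerivAt_comp_norm hy).fderiv]
  simp [EuclideanSpace.inner_single_right]

theorem pd_pd_comp_norm {v w : ℝ → ℝ} {ψ' : ℝ} {x : E2} (hx : x ≠ 0)
    (hv : ∀ t, 0 < t → HasDerivAt v (w t) t) (hψ : HasDerivAt (fun t => w t / t) ψ' ‖x‖)
    (i : Fin 2) :
    pd i (pd i (fun z => v ‖z‖)) x = ψ' / ‖x‖ * x i ^ 2 + w ‖x‖ / ‖x‖ := by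
  have hpd : pd i (fun z => v ‖z‖) =ᶠ[𝓝 x] fun y => w ‖y‖ / ‖y‖ * y i := by
    filter_upwards [isOpen_compl_singleton.mem_nhds hx] with y hy
    exact pd_comp_norm hy (hv _ (norm_pos_iff.2 hy)) i
  have hprod : HasFDerivAt (fun y : E2 => w ‖y‖ / ‖y‖ * y i) _ x :=
    (hψ.hasFDerivAt_comp_norm hx).mul (EuclideanSpace.proj i : E2 →L[ℝ] ℝ).hasFDerivAt
  rw [pd, hpd.fderiv_eq, hprod.fderiv]
  simp only [add_apply, smul_apply, PiLp.proj_apply, PiLp.single_eq_same, smul_eq_mul, mul_one,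
    coe_innerSL_apply, EuclideanSpace.inner_single_right, Real.ringHom_apply, one_mul]
  ring

theorem laplacian_comp_norm {v w : ℝ → ℝ} {w' : ℝ} {x : E2} (hx : x ≠ 0)
    (hv : ∀ t, 0 < t → HasDerivAt v (w t) t) (hw : HasDerivAt w w' ‖x‖) :
    pd 0 (pd 0 (fun z => v ‖z‖)) x + pd 1 (pd 1 (fun z => v ‖z‖)) x = w' + w ‖x‖ / ‖x‖ := by
  have hx' : ‖x‖ ≠ 0 := norm_ne_zero_iff.2 hx
  have hψ := hw.div (hasDerivAt_id' _) hx'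
  have hnorm : x 0 ^ 2 + x 1 ^ 2 = ‖x‖ ^ 2 := by
    simp [EuclideanSpace.norm_sq_eq, Fin.sum_univ_two]
  rw [pd_pd_comp_norm hx hv hψ, pd_pd_comp_norm hx hv hψ]
  field_simp
  linear_combination (w' * ‖x‖ - w ‖x‖) * hnorm

theorem hasDerivAt_mul_deriv_of_laplacian_eq {v w w' φ : ℝ → ℝ}
    (hv : ∀ t, 0 < t → HasDerivAt v (w t) t) (hw : ∀ t, 0 < t → HasDerivAt w (w' t) t)
    (hlap : ∀ x : E2, x ≠ 0 →
      pd 0 (pd 0 (fun z : E2 => v ‖z‖)) x + pd 1 (pd 1 (fun z : E2 => v ‖z‖)) x = φ ‖x‖)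
    {r : ℝ} (hr : 0 < r) : HasDerivAt (fun t => t * w t) (r * φ r) r := by
  set x : E2 := EuclideanSpace.single 0 r
  have hxr : ‖x‖ = r := by simp [x, abs_of_pos hr]
  have hx0 : x ≠ 0 := by
    intro h
    simp [h, hr.ne] at hxr
  have hode := hlap x hx0
  rw [laplacian_comp_norm hx0 hv (hxr ▸ hw r hr), hxr] at hode
  refine ((hasDerivAt_id' r).mul (hw r hr)).congr_deriv ?_
  rw [← hode]
  field_simp
  ring

theorem eq_zero_of_tendsto_mul_deriv_of_memLp_gradient {v w : ℝ → ℝ} {C : ℝ}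
    (hv : ∀ t, 0 < t → HasDerivAt v (w t) t)
    (hgrad : MemLp (gradient (fun z : E2 => v ‖z‖)) 2 (volume.restrict (ball (0 : E2) 1)))
    (hC : Tendsto (fun t => t * w t) (𝓝[>] 0) (𝓝 C)) : C = 0 := by
  by_contra hC0
  have hCpos : 0 < |C| := abs_pos.2 hC0
  obtain ⟨ε, hε, hεC⟩ := mem_nhdsGT_iff_exists_Ioo_subset.1
    (hC.abs.eventually (lt_mem_nhds (half_lt_self hCpos)))
  have hsq : IntegrableOn (fun x : E2 => ‖gradient (fun z : E2 => v ‖z‖) x‖ ^ 2) (ball 0 1) :=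
    (memLp_two_iff_integrable_sq_norm hgrad.1).1 hgrad
  have hbound : ∀ x ∈ ball (0 : E2) (min ε 1),
      ‖‖x‖ ^ (-(finrank ℝ E2 : ℝ))‖ ≤ (2 / |C|) ^ 2 * ‖gradient (fun z : E2 => v ‖z‖) x‖ ^ 2 := by
    intro x hx
    rcases eq_or_ne x 0 with rfl | hx0
    · rw [norm_zero, Real.zero_rpow (by simp), norm_zero]
      positivity
    have hxpos : 0 < ‖x‖ := norm_pos_iff.2 hx0
    have hlow : |C| / 2 < ‖x‖ * |w ‖x‖| := by
      simpa [abs_mul, abs_of_pos hxpos] using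
        hεC ⟨hxpos, (mem_ball_zero_iff.1 hx).trans_le (min_le_left _ _)⟩
    have hinv : ‖x‖⁻¹ ≤ 2 / |C| * |w ‖x‖| := by
      rw [inv_le_iff_one_le_mul₀ hxpos]
      field_simp
      linarith
    rw [norm_gradient_comp_norm hx0 (hv _ hxpos), finrank_euclideanSpace_fin, Nat.cast_ofNat,
      Real.rpow_neg hxpos.le, Real.rpow_two, ← inv_pow, Real.norm_eq_abs,
      abs_of_nonneg (by positivity), ← mul_pow]
    exact pow_le_pow_left₀ (by positivity) hinv 2
  exact not_integrableOn_ball_norm_rpow_neg_finrank volume (lt_min hε one_pos)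
    (((hsq.mono_set (ball_subset_ball (min_le_right _ _))).const_mul _).mono'
      (measurable_norm.pow_const _).aestronglyMeasurable
      ((ae_restrict_mem measurableSet_ball).mono hbound))

/-- `2π · radialFlux φ ρ` is the integral of `φ(|x|)` over the disc of radius `ρ`. -/
def radialFlux (φ : ℝ → ℝ) (ρ : ℝ) : ℝ :=
  ∫ τ in Ioc 0 ρ, τ * φ τ

section RadialFlux

variable {φ : ℝ → ℝ} {K σ : ℝ}

theorem abs_mul_le_rpow_of_abs_le (hφb : ∀ τ, 0 < τ → |φ τ| ≤ K * τ ^ (σ - 1)) {τ : ℝ}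
    (hτ : 0 < τ) : |τ * φ τ| ≤ K * τ ^ σ := by
  rw [abs_mul, abs_of_pos hτ]
  calc τ * |φ τ| ≤ τ * (K * τ ^ (σ - 1)) := mul_le_mul_of_nonneg_left (hφb τ hτ) hτ.le
    _ = K * τ ^ σ := by rw [Real.rpow_sub_one hτ.ne']; field_simp

theorem abs_radialFlux_le (hσ : -1 < σ) (hφb : ∀ τ, 0 < τ → |φ τ| ≤ K * τ ^ (σ - 1)) {ρ : ℝ}
    (hρ : 0 ≤ ρ) : |radialFlux φ ρ| ≤ K * ρ ^ (σ + 1) / (σ + 1) :=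
  abs_integral_Ioc_zero_le_rpow hσ (fun _ hτ => abs_mul_le_rpow_of_abs_le hφb hτ) hρ

theorem tendsto_radialFlux_zero (hσ : -1 < σ) (hφb : ∀ τ, 0 < τ → |φ τ| ≤ K * τ ^ (σ - 1)) :
    Tendsto (radialFlux φ) (𝓝[>] 0) (𝓝 0) := by
  have hbound : Tendsto (fun ρ : ℝ => K * ρ ^ (σ + 1) / (σ + 1)) (𝓝[>] 0) (𝓝 0) := by
    have h := ((Real.continuousAt_rpow_const 0 (σ + 1) (Or.inr (by linarith))).tendsto.const_mul
      K).div_const (σ + 1)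
    rw [Real.zero_rpow (by linarith), mul_zero, zero_div] at h
    exact h.mono_left nhdsWithin_le_nhds
  refine squeeze_zero_norm' ?_ hbound
  filter_upwards [self_mem_nhdsWithin] with ρ hρ
  exact abs_radialFlux_le hσ hφb (le_of_lt hρ)

theorem hasDerivAt_radialFlux (hσ : -1 < σ) (hφc : ContinuousOn φ (Ioi 0))
    (hφb : ∀ τ, 0 < τ → |φ τ| ≤ K * τ ^ (σ - 1)) {r : ℝ} (hr : 0 < r) :
    HasDerivAt (radialFlux φ) (r * φ r) r :=
  hasDerivAt_integral_Ioc_zero hr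
    (integrableOn_Ioc_zero_of_abs_le_rpow hσ (continuousOn_id.mul hφc)
      (fun _ hτ => abs_mul_le_rpow_of_abs_le hφb hτ) r)
    (continuousOn_id.mul hφc)

theorem hasDerivAt_calJ (hσ : -1 < σ) (hφc : ContinuousOn φ (Ioi 0))
    (hφb : ∀ τ, 0 < τ → |φ τ| ≤ K * τ ^ (σ - 1)) {r : ℝ} (hr : 0 < r) :
    HasDerivAt (calJ φ) (radialFlux φ r / r) r := by
  have hcont : ContinuousOn (fun ρ => radialFlux φ ρ / ρ) (Ioi 0) :=
    ContinuousOn.div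
      (fun ρ hρ => (hasDerivAt_radialFlux hσ hφc hφb hρ).continuousAt.continuousWithinAt)
      continuousOn_id fun ρ hρ => ne_of_gt hρ
  have hbound : ∀ ρ, 0 < ρ → |radialFlux φ ρ / ρ| ≤ K / (σ + 1) * ρ ^ σ := by
    intro ρ hρ
    rw [abs_div, abs_of_pos hρ, div_le_iff₀ hρ]
    calc |radialFlux φ ρ| ≤ K * ρ ^ (σ + 1) / (σ + 1) := abs_radialFlux_le hσ hφb hρ.le
      _ = K / (σ + 1) * ρ ^ σ * ρ := by rw [Real.rpow_add_one hρ.ne']; ring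
  exact hasDerivAt_integral_Ioc_zero hr (integrableOn_Ioc_zero_of_abs_le_rpow hσ hcont hbound r)
    hcont

end RadialFlux

theorem statement_6_general (σ K : ℝ) (hσ : σ ∈ Set.Ioo (1 / 2 : ℝ) 1)
    (φ : ℝ → ℝ) (hφc : ContinuousOn φ (Set.Ioi 0))
    (hφb : ∀ τ : ℝ, 0 < τ → |φ τ| ≤ K * τ ^ (σ - 1))
    (v : ℝ → ℝ) (hv : ContDiffOn ℝ 2 v (Set.Ioi 0))
    (hlap : ∀ x : E2, x ≠ 0 →
      pd 0 (pd 0 (fun z : E2 => v ‖z‖)) x + pd 1 (pd 1 (fun z : E2 => v ‖z‖)) x = φ ‖x‖)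
    (p : ℝ≥0∞) (hp : 2 < p)
    (hgrad : MemLp (gradient (fun z : E2 => v ‖z‖)) p
      (volume.restrict (Metric.ball (0 : E2) 1))) :
    ∃ c : ℝ, ∀ r : ℝ, 0 < r → v r = calJ φ r + c := by
  have hσ' : -1 < σ := by linarith [hσ.1]
  have hv' : ContDiffOn ℝ 1 (deriv v) (Ioi 0) := hv.deriv_of_isOpen isOpen_Ioi (by norm_num)
  have hv₁ : ∀ t, 0 < t → HasDerivAt v (deriv v t) t := fun t ht =>
    ((hv.differentiableOn (by norm_num) t ht).differentiableAt (Ioi_mem_nhds ht)).hasDerivAt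
  have hv₂ : ∀ t, 0 < t → HasDerivAt (deriv v) (deriv (deriv v) t) t := fun t ht =>
    ((hv'.differentiableOn one_ne_zero t ht).differentiableAt (Ioi_mem_nhds ht)).hasDerivAt
  obtain ⟨C, hC⟩ := exists_eq_add_of_hasDerivAt_Ioi
    (fun t ht => hasDerivAt_mul_deriv_of_laplacian_eq hv₁ hv₂ hlap ht)
    (fun t ht => hasDerivAt_radialFlux hσ' hφc hφb ht)
  have hlim : Tendsto (fun t => t * deriv v t) (𝓝[>] 0) (𝓝 C) := by
    have h := (tendsto_radialFlux_zero hσ' hφb).add_const C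
    rw [zero_add] at h
    exact h.congr' (eventually_nhdsWithin_of_forall fun t ht => (hC t ht).symm)
  have : IsFiniteMeasure (volume.restrict (ball (0 : E2) 1)) :=
    isFiniteMeasure_restrict.2 measure_ball_lt_top.ne
  have hC0 : C = 0 :=
    eq_zero_of_tendsto_mul_deriv_of_memLp_gradient hv₁ (hgrad.mono_exponent hp.le) hlim
  exact exists_eq_add_of_hasDerivAt_Ioi hv₁ fun t ht =>
    (hasDerivAt_calJ hσ' hφc hφb ht).congr_deriv
      (by rw [div_eq_iff ht.ne', mul_comm, hC t ht, hC0, add_zero])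

/-- Uniqueness for the radial Poisson equation: if `u(x) = v(|x|)` is
radial, `Δu = φ(|·|)` away from the origin, and `∇u ∈ Lᵖ(B₁(0))` for some `p ∈ (2,∞]`,
then `v = 𝒥[φ] + c` on `(0,∞)` for some constant `c`. -/
theorem statement_6 (σ K : ℝ) (hσ : σ ∈ Set.Ioo (1 / 2 : ℝ) 1) (hK : 0 ≤ K)
    (φ : ℝ → ℝ) (hφc : ContinuousOn φ (Set.Ioi 0))
    (hφb : ∀ τ : ℝ, 0 < τ → |φ τ| ≤ K * τ ^ (σ - 1))
    (v : ℝ → ℝ) (hv : ContDiffOn ℝ 2 v (Set.Ioi 0))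
    (hlap : ∀ x : E2, x ≠ 0 →
      pd 0 (pd 0 (fun z : E2 => v ‖z‖)) x + pd 1 (pd 1 (fun z : E2 => v ‖z‖)) x = φ ‖x‖)
    (p : ℝ≥0∞) (hp : 2 < p)
    (hgrad : MemLp (gradient (fun z : E2 => v ‖z‖)) p
      (volume.restrict (Metric.ball (0 : E2) 1))) :
    ∃ c : ℝ, ∀ r : ℝ, 0 < r → v r = calJ φ r + c :=
  statement_6_general σ K hσ φ hφc hφb v hv hlap p hp hgrad
end
end

section
/- There is an absolute constant C such that for all s ∈ ℝ, y ∈ ℝ² and α ∈ ℝ² with α ≠ 0: if |α| ≤ |y|/2 then |(δ_α + δ_{−α}) k^Lin_s(y)| = |2k^Lin_s(y) − k^Lin_s(y−α) − k^Lin_s(y+α)| ≤ C·|s|·(|α|²/√(|y|²+|α|²+1) + 1), and if |α| ≥ |y|/2 then |(δ_α + δ_{−α}) k^Lin_s(y)| ≤ C·|s|·|α|. -/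
open MeasureTheory

noncomputable section

/-- The solution `k^Lin_s` of the linearized self-similar Muskat profile equation. -/
def kLin (s : ℝ) (y : E2) : ℝ :=
  s * (Real.sqrt (‖y‖ ^ 2 + 1) - Real.log (Real.sqrt (‖y‖ ^ 2 + 1) + 1))

/-!
Write `kLin s y = s * φ ‖(y, 1)‖` with `φ R = R - log (R + 1)`, the norm being the L² norm on
`E2 × ℝ`, so that the shifts `y ± α` become `v ± w` with `v = (y, 1)` and `w = (α, 0)`.
As `0 ≤ φ' < 1`, `φ` is 1-Lipschitz on `[0, ∞)`, which bounds the second difference by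
`2 |s| ‖α‖` everywhere. When `‖α‖ ≤ ‖y‖ / 2`, treat the two terms of `φ`
separately: the norm is convex and, by the parallelogram law, `‖v + w‖ + ‖v - w‖` is at most
`2 √(‖v‖² + ‖w‖²)`, so its second difference lies in `[0, 2 ‖w‖² / √(‖v‖² + ‖w‖²)]`; and
`‖v‖`, `‖v ± w‖` are within a factor 2 of each other, so the logarithms contribute at most
`2 log 2`.
-/

open Real

theorem abs_log_sub_log_le_log_two {x y : ℝ} (hx : 0 < x) (hy : 0 < y) (hxy : x ≤ 2 * y)
    (hyx : y ≤ 2 * x) : |log x - log y| ≤ log 2 := by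
  rw [abs_sub_le_iff, ← log_div hx.ne' hy.ne', ← log_div hy.ne' hx.ne']
  exact ⟨log_le_log (by positivity) ((div_le_iff₀ hy).2 hxy),
    log_le_log (by positivity) ((div_le_iff₀ hx).2 hyx)⟩

theorem log_add_one_le_log_add_one_add_sub {u v : ℝ} (hu : 0 ≤ u) (huv : u ≤ v) :
    log (v + 1) ≤ log (u + 1) + (v - u) := by
  have hu1 : 0 < u + 1 := by linarith
  have hv1 : 0 < v + 1 := by linarith
  have hratio := log_le_sub_one_of_pos (div_pos hv1 hu1)
  rw [log_div hv1.ne' hu1.ne'] at hratio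
  have : (v + 1) / (u + 1) - 1 ≤ v - u := by
    rw [div_sub_one hu1.ne', div_le_iff₀ hu1]
    nlinarith
  linarith

def kProfile (R : ℝ) : ℝ := R - log (R + 1)

theorem abs_kProfile_sub_le {u v : ℝ} (hu : 0 ≤ u) (hv : 0 ≤ v) :
    |kProfile u - kProfile v| ≤ |u - v| := by
  wlog huv : u ≤ v generalizing u v
  · rw [abs_sub_comm, abs_sub_comm u]
    exact this hv hu (le_of_not_ge huv)
  have hmono : log (u + 1) ≤ log (v + 1) := log_le_log (by positivity) (by linarith)
  have hlip := log_add_one_le_log_add_one_add_sub hu huv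
  rw [abs_of_nonpos (sub_nonpos.2 huv), abs_le]
  unfold kProfile
  constructor <;> linarith

section SeminormedAddCommGroup

variable {E : Type*} [SeminormedAddCommGroup E]

theorem abs_log_norm_add_add_one_sub_le {v w : E} (hw : ‖w‖ ≤ ‖v‖ / 2) :
    |log (‖v + w‖ + 1) - log (‖v‖ + 1)| ≤ log 2 := by
  have hle : ‖v + w‖ ≤ ‖v‖ + ‖w‖ := norm_add_le v w
  have hge : ‖v‖ - ‖w‖ ≤ ‖v + w‖ := by simpa using norm_sub_norm_le v (-w)
  exact abs_log_sub_log_le_log_two (by positivity) (by positivity) (by linarith) (by linarith)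

theorem abs_kProfile_second_diff_le (v w : E) :
    |2 * kProfile ‖v‖ - kProfile ‖v - w‖ - kProfile ‖v + w‖| ≤ 2 * ‖w‖ := by
  have hsub := (abs_kProfile_sub_le (norm_nonneg v) (norm_nonneg (v - w))).trans
    (by simpa using abs_norm_sub_norm_le v (v - w))
  have hadd := (abs_kProfile_sub_le (norm_nonneg v) (norm_nonneg (v + w))).trans
    (by simpa using abs_norm_sub_norm_le v (v + w))
  calc _ = |(kProfile ‖v‖ - kProfile ‖v - w‖) + (kProfile ‖v‖ - kProfile ‖v + w‖)| := by ring_nf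
    _ ≤ _ := (abs_add_le _ _).trans (by linarith)

def bracket (y : E) : WithLp 2 (E × ℝ) := WithLp.toLp 2 (y, 1)

theorem norm_bracket (y : E) : ‖bracket y‖ = √(‖y‖ ^ 2 + 1) := by
  simp [bracket, WithLp.prod_norm_eq_of_L2]

end SeminormedAddCommGroup

section InnerProductSpace

variable {F : Type*} [NormedAddCommGroup F] [InnerProductSpace ℝ F]

theorem norm_add_add_norm_sub_le (v w : F) :
    ‖v + w‖ + ‖v - w‖ ≤ 2 * √(‖v‖ ^ 2 + ‖w‖ ^ 2) := by
  have hpar := parallelogram_law_with_norm ℝ v w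
  refine (pow_le_pow_iff_left₀ (by positivity) (by positivity) two_ne_zero).1 ?_
  rw [mul_pow, sq_sqrt (by positivity)]
  nlinarith [sq_nonneg (‖v + w‖ - ‖v - w‖)]

theorem abs_norm_add_add_norm_sub_sub_le (v w : F) :
    |‖v + w‖ + ‖v - w‖ - 2 * ‖v‖| ≤ 2 * ‖w‖ ^ 2 / √(‖v‖ ^ 2 + ‖w‖ ^ 2) := by
  have hconvex : 2 * ‖v‖ ≤ ‖v + w‖ + ‖v - w‖ := by
    simpa [← two_smul ℝ v, norm_smul] using norm_add_le (v + w) (v - w)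
  set S := √(‖v‖ ^ 2 + ‖w‖ ^ 2)
  have hS : S ^ 2 = ‖v‖ ^ 2 + ‖w‖ ^ 2 := sq_sqrt (by positivity)
  have hvS : ‖v‖ ≤ S := le_sqrt_of_sq_le (by nlinarith)
  have hgap : S - ‖v‖ ≤ ‖w‖ ^ 2 / S := by
    rcases (sqrt_nonneg _).eq_or_lt with h | h
    · have : S = 0 := h.symm
      simp only [this, div_zero]
      linarith [norm_nonneg v]
    · rw [le_div_iff₀ h]
      nlinarith [norm_nonneg v]
  rw [abs_of_nonneg (by linarith), mul_div_assoc]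
  linarith [norm_add_add_norm_sub_le v w]

theorem abs_kProfile_second_diff_le_of_le_half {v w : F} (hw : ‖w‖ ≤ ‖v‖ / 2) :
    |2 * kProfile ‖v‖ - kProfile ‖v - w‖ - kProfile ‖v + w‖| ≤
      2 * ‖w‖ ^ 2 / √(‖v‖ ^ 2 + ‖w‖ ^ 2) + 2 * log 2 := by
  have hnorm := abs_norm_add_add_norm_sub_sub_le v w
  have hadd := abs_log_norm_add_add_one_sub_le hw
  have hsub := abs_log_norm_add_add_one_sub_le (w := -w) (by simpa using hw)
  rw [← sub_eq_add_neg] at hsub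
  calc _ = |-(‖v + w‖ + ‖v - w‖ - 2 * ‖v‖) + (log (‖v + w‖ + 1) - log (‖v‖ + 1))
          + (log (‖v - w‖ + 1) - log (‖v‖ + 1))| := by unfold kProfile; ring_nf
    _ ≤ _ := (abs_add_three _ _ _).trans (by rw [abs_neg]; linarith)

end InnerProductSpace

theorem kLin_eq (s : ℝ) (y : E2) : kLin s y = s * kProfile ‖bracket y‖ := by
  rw [norm_bracket, kLin, kProfile]

theorem second_diff_kLin (s : ℝ) (y α : E2) :
    2 * kLin s y - kLin s (y - α) - kLin s (y + α) =
      s * (2 * kProfile ‖bracket y‖ - kProfile ‖bracket y - WithLp.toLp 2 (α, 0)‖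
        - kProfile ‖bracket y + WithLp.toLp 2 (α, 0)‖) := by
  have hsub : bracket (y - α) = bracket y - WithLp.toLp 2 (α, 0) := by
    simp [bracket, ← WithLp.toLp_sub]
  have hadd : bracket (y + α) = bracket y + WithLp.toLp 2 (α, 0) := by
    simp [bracket, ← WithLp.toLp_add]
  simp only [kLin_eq, hsub, hadd]
  ring

/-- Bounds on `(δ_α + δ_{−α})k^Lin_s(y) = 2k^Lin_s(y) − k^Lin_s(y−α) − k^Lin_s(y+α)`:
if `|α| ≤ |y|/2` it is bounded by `C|s|(|α|²/√(|y|²+|α|²+1) + 1)`,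
and if `|α| ≥ |y|/2` it is bounded by `C|s||α|`. -/
theorem statement_13 :
    ∃ C > (0 : ℝ), ∀ (s : ℝ) (y α : E2), α ≠ 0 →
      (‖α‖ ≤ ‖y‖ / 2 →
        |2 * kLin s y - kLin s (y - α) - kLin s (y + α)| ≤
          C * |s| * (‖α‖ ^ 2 / Real.sqrt (‖y‖ ^ 2 + ‖α‖ ^ 2 + 1) + 1)) ∧
      (‖y‖ / 2 ≤ ‖α‖ →
        |2 * kLin s y - kLin s (y - α) - kLin s (y + α)| ≤ C * |s| * ‖α‖) := by
  refine ⟨2, two_pos, fun s y α _ => ?_⟩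
  rw [second_diff_kLin, abs_mul]
  have hw : ‖(WithLp.toLp 2 (α, 0) : WithLp 2 (E2 × ℝ))‖ = ‖α‖ := by simp
  refine ⟨fun hα => ?_, fun _ => ?_⟩
  · have hy : ‖y‖ ≤ ‖bracket y‖ := by
      rw [norm_bracket]; exact le_sqrt_of_sq_le (by linarith)
    have h := abs_kProfile_second_diff_le_of_le_half (v := bracket y) (w := WithLp.toLp 2 (α, 0))
      (by rw [hw]; linarith)
    have hS : √(‖bracket y‖ ^ 2 + ‖α‖ ^ 2) = √(‖y‖ ^ 2 + ‖α‖ ^ 2 + 1) := by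
      rw [norm_bracket, sq_sqrt (by positivity), add_right_comm]
    rw [hw, hS] at h
    have hlog2 : log 2 ≤ 1 := by linarith [log_le_sub_one_of_pos two_pos]
    calc |s| * _ ≤ |s| * (2 * ‖α‖ ^ 2 / √(‖y‖ ^ 2 + ‖α‖ ^ 2 + 1) + 2 * log 2) := by gcongr
      _ ≤ _ := by rw [mul_div_assoc]; nlinarith [abs_nonneg s]
  · calc |s| * _ ≤ |s| * (2 * ‖α‖) := by gcongr; rw [← hw]; exact abs_kProfile_second_diff_le _ _
      _ = 2 * |s| * ‖α‖ := by ring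
end
end
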